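/- arXiv:1005.2104 — 5 statements merged into one kernel-verified Lean document; each statement's English description precedes it below -/
import Mathlib

section
/- For every real k, |J⁰(k)| ≤ 1, and for every k > 0, |J⁰(k)| ≤ 2^(-1/4) · k^(-1/2); equivalently |J⁰(k)| ≤ min(1, 1/(2^(1/4)·√k)) for k > 0. -/
open MeasureTheory Real

/-- The zeroth-order Bessel function `J⁰(k) = (1/π) ∫₀^π cos(k cos θ) dθ`. -/
noncomputable def J0 (k : ℝ) : ℝ :=
  (1 / Real.pi) * ∫ θ in (0:ℝ)..Real.pi, Real.cos (k * Real.cos θ)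

/-!
Differentiating under the integral sign shows that `J0` solves Bessel's equation
`x J'' + J' + x J = 0`. Along a solution the energy `E = x (J'² + J²) + J J' + J² / (2x)` has
`E' = -J² / (2x²) ≤ 0`, and `E ≥ x J²` because `x J'² + J J' + J² / (4x)` is a perfect square.
Hence `x J0(x)² ≤ E(3/2) < 7/10` for `x ≥ 3/2`, with `E(3/2)` estimated from the power series
of `J0` and of `J0' = -J₁` truncated with explicit error, obtained by integrating the Taylor
bounds for `cos` and `sin` term by term. For `x ≤ 3/2` the truncated series bounds `x J0(x)²`
directly. Since `7/10 < 1/√2`, the bound `x J0(x)² ≤ 7/10` gives `|J0(x)| ≤ 2^(-1/4) x^(-1/2)`.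
-/

open Finset Nat

noncomputable def cosTaylor (n : ℕ) (t : ℝ) : ℝ :=
  ∑ j ∈ range n, (-1) ^ j * t ^ (2 * j) / (2 * j)!

noncomputable def sinTaylor (n : ℕ) (t : ℝ) : ℝ :=
  ∑ j ∈ range n, (-1) ^ j * t ^ (2 * j + 1) / (2 * j + 1)!

lemma hasDerivAt_sinTaylor (n : ℕ) (t : ℝ) : HasDerivAt (sinTaylor n) (cosTaylor n t) t := by
  unfold sinTaylor cosTaylor
  refine (HasDerivAt.fun_sum fun j _ =>
    ((hasDerivAt_pow _ t).const_mul _).div_const _).congr_deriv ?_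
  refine sum_congr rfl fun j _ => ?_
  push_cast [factorial_succ]
  field_simp

lemma hasDerivAt_cosTaylor_succ (n : ℕ) (t : ℝ) :
    HasDerivAt (cosTaylor (n + 1)) (-sinTaylor n t) t := by
  have h : cosTaylor (n + 1) = fun t : ℝ =>
      ∑ j ∈ range n, (-1) ^ (j + 1) * t ^ (2 * (j + 1)) / (2 * (j + 1))! + 1 := by
    ext t; simp [cosTaylor, sum_range_succ']
  rw [h, sinTaylor, ← sum_neg_distrib]
  refine ((HasDerivAt.fun_sum fun j _ =>
    ((hasDerivAt_pow _ t).const_mul _).div_const _).add_const 1).congr_deriv ?_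
  refine sum_congr rfl fun j _ => ?_
  rw [show 2 * (j + 1) = 2 * j + 1 + 1 by ring]
  push_cast [factorial_succ, pow_succ]
  field_simp

lemma cosTaylor_neg (n : ℕ) (t : ℝ) : cosTaylor n (-t) = cosTaylor n t := by
  simp [cosTaylor, pow_mul]

lemma sinTaylor_neg (n : ℕ) (t : ℝ) : sinTaylor n (-t) = -sinTaylor n t := by
  simp [sinTaylor, pow_succ, pow_mul, ← sum_neg_distrib, neg_div]

lemma abs_le_pow_succ_div_factorial_of_hasDerivAt {f g : ℝ → ℝ} (hf : ∀ s, HasDerivAt f (g s) s)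
    (hg : Continuous g) (hf0 : f 0 = 0) {n : ℕ} (hgn : ∀ s, 0 ≤ s → |g s| ≤ s ^ n / n !)
    {t : ℝ} (ht : 0 ≤ t) : |f t| ≤ t ^ (n + 1) / (n + 1)! := by
  have hft : f t = ∫ s in (0 : ℝ)..t, g s := by
    rw [intervalIntegral.integral_eq_sub_of_hasDerivAt (fun s _ => hf s)
      (hg.intervalIntegrable 0 t), hf0, sub_zero]
  calc |f t| ≤ ∫ s in (0 : ℝ)..t, |g s| := hft ▸ intervalIntegral.abs_integral_le_integral_abs ht
    _ ≤ ∫ s in (0 : ℝ)..t, s ^ n / n ! :=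
        intervalIntegral.integral_mono_on ht (hg.abs.intervalIntegrable 0 t)
          (by apply Continuous.intervalIntegrable; fun_prop) fun s hs => hgn s hs.1
    _ = t ^ (n + 1) / (n + 1)! := by
        rw [intervalIntegral.integral_div, integral_pow]
        push_cast [factorial_succ]
        field_simp
        simp

lemma continuous_cosTaylor (n : ℕ) : Continuous (cosTaylor n) := by
  unfold cosTaylor; fun_prop

lemma continuous_sinTaylor (n : ℕ) : Continuous (sinTaylor n) := by
  unfold sinTaylor; fun_prop

lemma cosTaylor_succ_zero (n : ℕ) : cosTaylor (n + 1) 0 = 1 := by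
  simp [cosTaylor, sum_range_succ']

lemma abs_cos_sub_cosTaylor_le_and_abs_sin_sub_sinTaylor_le (n : ℕ) {t : ℝ} (ht : 0 ≤ t) :
    |cos t - cosTaylor n t| ≤ t ^ (2 * n) / (2 * n)! ∧
      |sin t - sinTaylor n t| ≤ t ^ (2 * n + 1) / (2 * n + 1)! := by
  induction n generalizing t with
  | zero =>
    exact ⟨by simpa [cosTaylor] using abs_cos_le_one t,
      by simpa [sinTaylor, abs_of_nonneg ht] using abs_sin_le_abs (x := t)⟩
  | succ n ih =>
    have hcos {s : ℝ} (hs : 0 ≤ s) :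
        |cos s - cosTaylor (n + 1) s| ≤ s ^ (2 * (n + 1)) / (2 * (n + 1))! :=
      abs_le_pow_succ_div_factorial_of_hasDerivAt (f := fun s => cos s - cosTaylor (n + 1) s)
        (g := fun s => -(sin s - sinTaylor n s))
        (fun s => ((hasDerivAt_cos s).sub (hasDerivAt_cosTaylor_succ n s)).congr_deriv (by ring))
        (continuous_sin.sub (continuous_sinTaylor n)).neg (by simp [cosTaylor_succ_zero])
        (fun s hs => by simpa [abs_sub_comm] using (ih hs).2) hs
    exact ⟨hcos ht, abs_le_pow_succ_div_factorial_of_hasDerivAt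
      (f := fun s => sin s - sinTaylor (n + 1) s)
      (fun s => (hasDerivAt_sin s).sub (hasDerivAt_sinTaylor (n + 1) s))
      (continuous_cos.sub (continuous_cosTaylor _)) (by simp [sinTaylor]) (fun s hs => hcos hs) ht⟩

lemma abs_cos_sub_cosTaylor_le (n : ℕ) (t : ℝ) :
    |cos t - cosTaylor n t| ≤ |t| ^ (2 * n) / (2 * n)! := by
  rcases abs_choice t with h | h <;>
    simpa [h, cosTaylor_neg] using
      (abs_cos_sub_cosTaylor_le_and_abs_sin_sub_sinTaylor_le n (abs_nonneg t)).1

lemma abs_sin_sub_sinTaylor_le (n : ℕ) (t : ℝ) :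
    |sin t - sinTaylor n t| ≤ |t| ^ (2 * n + 1) / (2 * n + 1)! := by
  have := (abs_cos_sub_cosTaylor_le_and_abs_sin_sub_sinTaylor_le n (abs_nonneg t)).2
  rcases abs_choice t with h | h <;> rw [h] at this ⊢
  · exact this
  · rwa [sin_neg, sinTaylor_neg, ← neg_sub', abs_neg] at this

lemma hasDerivAt_intervalIntegral_of_abs_deriv_le {F F' : ℝ → ℝ → ℝ} {a b C : ℝ}
    (hF : Continuous (Function.uncurry F)) (hF' : Continuous (Function.uncurry F'))
    (hderiv : ∀ x t, HasDerivAt (F · t) (F' x t) x) (hbound : ∀ x t, |F' x t| ≤ C) (x₀ : ℝ) :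
    HasDerivAt (fun x => ∫ t in a..b, F x t) (∫ t in a..b, F' x₀ t) x₀ :=
  (intervalIntegral.hasDerivAt_integral_of_dominated_loc_of_deriv_le (bound := fun _ => C)
    (s := Set.univ) Filter.univ_mem
    (.of_forall fun x => (hF.comp (Continuous.prodMk_right x)).aestronglyMeasurable)
    ((hF.comp (Continuous.prodMk_right x₀)).intervalIntegrable a b)
    (hF'.comp (Continuous.prodMk_right x₀)).aestronglyMeasurable
    (.of_forall fun t _ x _ => hbound x t) intervalIntegrable_const
    (.of_forall fun t _ x _ => hderiv x t)).2

noncomputable def J0' (k : ℝ) : ℝ :=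
  (1 / π) * ∫ θ in (0 : ℝ)..π, -(cos θ * sin (k * cos θ))

noncomputable def J0'' (k : ℝ) : ℝ :=
  (1 / π) * ∫ θ in (0 : ℝ)..π, -(cos θ ^ 2 * cos (k * cos θ))

lemma hasDerivAt_J0 (k : ℝ) : HasDerivAt J0 (J0' k) k := by
  refine (hasDerivAt_intervalIntegral_of_abs_deriv_le (a := 0) (b := π) (C := 1)
    (F := fun x θ => cos (x * cos θ)) (F' := fun x θ => -(cos θ * sin (x * cos θ)))
    (by fun_prop) (by fun_prop)
    (fun x θ => ?_) (fun x θ => ?_) k).const_mul (1 / π)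
  · exact ((hasDerivAt_mul_const (cos θ)).cos).congr_deriv (by ring)
  · rw [abs_neg, abs_mul]
    exact mul_le_one₀ (abs_cos_le_one θ) (abs_nonneg _) (abs_sin_le_one _)

lemma hasDerivAt_J0' (k : ℝ) : HasDerivAt J0' (J0'' k) k := by
  refine (hasDerivAt_intervalIntegral_of_abs_deriv_le (a := 0) (b := π) (C := 1)
    (F := fun x θ => -(cos θ * sin (x * cos θ)))
    (F' := fun x θ => -(cos θ ^ 2 * cos (x * cos θ))) (by fun_prop) (by fun_prop)
    (fun x θ => ?_) (fun x θ => ?_) k).const_mul (1 / π)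
  · exact (((hasDerivAt_mul_const (cos θ)).sin.const_mul (cos θ)).neg).congr_deriv (by ring)
  · rw [abs_neg, abs_mul, abs_pow]
    exact mul_le_one₀ (pow_le_one₀ (abs_nonneg _) (abs_cos_le_one θ)) (abs_nonneg _)
      (abs_cos_le_one _)

lemma J0_ode (k : ℝ) : k * J0'' k + J0' k + k * J0 k = 0 := by
  -- integration by parts: `sin θ * sin (k * cos θ)` vanishes at `0` and `π`
  have hderiv (θ : ℝ) : HasDerivAt (fun θ => sin θ * sin (k * cos θ))
      (cos θ * sin (k * cos θ) - k * cos (k * cos θ) + k * (cos θ ^ 2 * cos (k * cos θ))) θ :=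
    ((hasDerivAt_sin θ).mul ((hasDerivAt_cos θ).const_mul k).sin).congr_deriv
      (by linear_combination (-k * cos (k * cos θ)) * sin_sq θ)
  have hparts := intervalIntegral.integral_eq_sub_of_hasDerivAt (a := 0) (b := π)
    (fun θ _ => hderiv θ) (by apply Continuous.intervalIntegrable; fun_prop)
  rw [intervalIntegral.integral_add (by apply Continuous.intervalIntegrable; fun_prop)
      (by apply Continuous.intervalIntegrable; fun_prop),
    intervalIntegral.integral_sub (by apply Continuous.intervalIntegrable; fun_prop)
      (by apply Continuous.intervalIntegrable; fun_prop),
    intervalIntegral.integral_const_mul, intervalIntegral.integral_const_mul] at hparts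
  simp only [sin_pi, sin_zero, zero_mul, sub_zero] at hparts
  simp only [J0, J0', J0'', intervalIntegral.integral_neg]
  linear_combination (-(1 / π)) * hparts

noncomputable def besselEnergy (x : ℝ) : ℝ :=
  x * (J0' x ^ 2 + J0 x ^ 2) + J0 x * J0' x + J0 x ^ 2 / (2 * x)

lemma hasDerivAt_besselEnergy {x : ℝ} (hx : x ≠ 0) :
    HasDerivAt besselEnergy (-(J0 x ^ 2) / (2 * x ^ 2)) x := by
  have hJ := hasDerivAt_J0 x
  have hJ' := hasDerivAt_J0' x
  have hJ'' : J0'' x = -(J0' x) / x - J0 x := by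
    field_simp; linear_combination J0_ode x
  refine ((((hasDerivAt_id x).mul ((hJ'.pow 2).add (hJ.pow 2))).add (hJ.mul hJ')).add
    ((hJ.pow 2).div ((hasDerivAt_id x).const_mul 2) (by simpa using hx))).congr_deriv ?_
  simp only [id, hJ'', Pi.add_apply, Pi.pow_apply]
  field_simp
  ring

lemma besselEnergy_antitoneOn : AntitoneOn besselEnergy (Set.Ioi 0) := by
  refine antitoneOn_of_hasDerivWithinAt_nonpos (convex_Ioi 0)
    (fun x hx => (hasDerivAt_besselEnergy (ne_of_gt hx)).continuousAt.continuousWithinAt)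
    (fun x hx => (hasDerivAt_besselEnergy (ne_of_gt (interior_subset hx))).hasDerivWithinAt)
    fun x _ => ?_
  exact div_nonpos_of_nonpos_of_nonneg (neg_nonpos.2 (sq_nonneg _)) (by positivity)

lemma mul_sq_J0_le_besselEnergy {x : ℝ} (hx : 0 < x) : x * J0 x ^ 2 ≤ besselEnergy x := by
  have hsq : 0 ≤ (2 * x * J0' x + J0 x) ^ 2 / (4 * x) + J0 x ^ 2 / (4 * x) := by positivity
  calc x * J0 x ^ 2
      ≤ x * J0 x ^ 2 + ((2 * x * J0' x + J0 x) ^ 2 / (4 * x) + J0 x ^ 2 / (4 * x)) :=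
        le_add_of_nonneg_right hsq
    _ = besselEnergy x := by unfold besselEnergy; field_simp; ring

lemma integral_cos_pow_two_mul (n : ℕ) :
    ∫ θ in (0 : ℝ)..π, cos θ ^ (2 * n) = π * (2 * n)! / (2 ^ n * n !) ^ 2 := by
  induction n with
  | zero => simp
  | succ n ih =>
    rw [show 2 * (n + 1) = 2 * n + 2 by ring, integral_cos_pow, ih]
    simp only [sin_pi, sin_zero, mul_zero, sub_zero, zero_div, zero_add]
    push_cast [factorial_succ]
    field_simp
    ring

lemma abs_mean_sub_mean_le {f g : ℝ → ℝ} (hf : Continuous f) (hg : Continuous g) {B : ℝ}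
    (h : ∀ θ, |f θ - g θ| ≤ B) :
    |(1 / π) * (∫ θ in (0 : ℝ)..π, f θ) - (1 / π) * ∫ θ in (0 : ℝ)..π, g θ| ≤ B := by
  rw [← mul_sub, ← intervalIntegral.integral_sub (hf.intervalIntegrable 0 π)
    (hg.intervalIntegrable 0 π), abs_mul, abs_of_pos (by positivity)]
  have := intervalIntegral.norm_integral_le_of_norm_le_const (a := 0) (b := π)
    (f := fun θ => f θ - g θ) fun θ _ => by rw [Real.norm_eq_abs]; exact h θ
  rw [sub_zero, abs_of_pos pi_pos, Real.norm_eq_abs] at this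
  calc 1 / π * |∫ θ in (0 : ℝ)..π, f θ - g θ| ≤ 1 / π * (B * π) := by gcongr
    _ = B := by field_simp

lemma abs_mul_cos_pow_le (k θ : ℝ) (m : ℕ) : |k * cos θ| ^ m ≤ |k| ^ m := by
  refine pow_le_pow_left₀ (abs_nonneg _) ?_ m
  rw [abs_mul]
  exact mul_le_of_le_one_right (abs_nonneg k) (abs_cos_le_one θ)

lemma abs_J0_sub_sum_le (n : ℕ) (k : ℝ) :
    |J0 k - ∑ j ∈ range n, (-1) ^ j * (k / 2) ^ (2 * j) / (j !) ^ 2| ≤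
      |k| ^ (2 * n) / (2 * n)! := by
  have hterm (θ : ℝ) : cosTaylor n (k * cos θ) =
      ∑ j ∈ range n, (-1) ^ j * k ^ (2 * j) / (2 * j)! * cos θ ^ (2 * j) :=
    sum_congr rfl fun j _ => by ring
  have hmean : (1 / π) * ∫ θ in (0 : ℝ)..π, cosTaylor n (k * cos θ) =
      ∑ j ∈ range n, (-1) ^ j * (k / 2) ^ (2 * j) / (j !) ^ 2 := by
    simp_rw [hterm]
    rw [intervalIntegral.integral_finsetSum fun j _ => by
      apply Continuous.intervalIntegrable; fun_prop, mul_sum]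
    refine sum_congr rfl fun j _ => ?_
    rw [intervalIntegral.integral_const_mul, integral_cos_pow_two_mul, div_pow]
    field_simp
    ring
  rw [← hmean]
  exact abs_mean_sub_mean_le (f := fun θ => cos (k * cos θ))
    (g := fun θ => cosTaylor n (k * cos θ)) (by fun_prop)
    ((continuous_cosTaylor n).comp (by fun_prop))
    fun θ => (abs_cos_sub_cosTaylor_le n _).trans
      ((div_le_div_iff_of_pos_right (by positivity)).2 (abs_mul_cos_pow_le k θ _))

lemma abs_J0'_add_sum_le (n : ℕ) (k : ℝ) :
    |J0' k + ∑ j ∈ range n, (-1) ^ j * (k / 2) ^ (2 * j + 1) / (j ! * (j + 1)!)| ≤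
      |k| ^ (2 * n + 1) / (2 * n + 1)! := by
  have hterm (θ : ℝ) : -(cos θ * sinTaylor n (k * cos θ)) =
      ∑ j ∈ range n, -((-1) ^ j * k ^ (2 * j + 1) / (2 * j + 1)!) * cos θ ^ (2 * (j + 1)) := by
    rw [sinTaylor, mul_sum, ← sum_neg_distrib]
    exact sum_congr rfl fun j _ => by ring
  have hmean : (1 / π) * ∫ θ in (0 : ℝ)..π, -(cos θ * sinTaylor n (k * cos θ)) =
      -∑ j ∈ range n, (-1) ^ j * (k / 2) ^ (2 * j + 1) / (j ! * (j + 1)!) := by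
    simp_rw [hterm]
    rw [intervalIntegral.integral_finsetSum fun j _ => by
      apply Continuous.intervalIntegrable; fun_prop, mul_sum, ← sum_neg_distrib]
    refine sum_congr rfl fun j _ => ?_
    rw [intervalIntegral.integral_const_mul, integral_cos_pow_two_mul,
      show 2 * (j + 1) = 2 * j + 1 + 1 by ring]
    push_cast [factorial_succ, div_pow]
    field_simp
    ring
  rw [← sub_neg_eq_add, ← hmean]
  refine abs_mean_sub_mean_le (f := fun θ => -(cos θ * sin (k * cos θ)))
    (g := fun θ => -(cos θ * sinTaylor n (k * cos θ))) (by fun_prop)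
    (continuous_cos.mul ((continuous_sinTaylor n).comp (by fun_prop))).neg fun θ => ?_
  rw [neg_sub_neg, ← mul_sub, abs_mul, abs_sub_comm]
  calc |cos θ| * |sin (k * cos θ) - sinTaylor n (k * cos θ)|
      ≤ 1 * (|k * cos θ| ^ (2 * n + 1) / (2 * n + 1)!) :=
        mul_le_mul (abs_cos_le_one θ) (abs_sin_sub_sinTaylor_le n _) (abs_nonneg _) zero_le_one
    _ ≤ |k| ^ (2 * n + 1) / (2 * n + 1)! := by
        rw [one_mul]
        exact (div_le_div_iff_of_pos_right (by positivity)).2 (abs_mul_cos_pow_le k θ _)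

lemma abs_J0_le_one (k : ℝ) : |J0 k| ≤ 1 := by
  simpa using abs_J0_sub_sum_le 0 k

lemma besselEnergy_three_halves_le : besselEnergy (3 / 2) ≤ 7 / 10 := by
  have hJ := abs_J0_sub_sum_le 4 (3 / 2)
  have hJ' := abs_J0'_add_sum_le 3 (3 / 2)
  simp only [sum_range_succ, sum_range_zero, factorial] at hJ hJ'
  norm_num [abs_le] at hJ hJ'
  unfold besselEnergy
  nlinarith

lemma mul_sq_J0_le_of_le_three_halves {k : ℝ} (hk0 : 0 ≤ k) (hk : k ≤ 3 / 2) :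
    k * J0 k ^ 2 ≤ 7 / 10 := by
  have hJ := abs_J0_sub_sum_le 4 k
  simp only [sum_range_succ, sum_range_zero, factorial] at hJ
  norm_num [abs_le, abs_of_nonneg hk0] at hJ
  have hk2 : k ^ 2 ≤ 9 / 4 := by nlinarith
  have hlow : 0 ≤ J0 k := by nlinarith [pow_nonneg hk0 4, pow_nonneg hk0 6, pow_nonneg hk0 8]
  -- `(1 - k ^ 2 / 8) ^ 2` is the series truncated after three terms
  have hup : J0 k ≤ (1 - k ^ 2 / 8) ^ 2 := by nlinarith [pow_nonneg hk0 6, pow_nonneg hk0 8]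
  calc k * J0 k ^ 2 ≤ k * (1 - k ^ 2 / 8) ^ 4 := by
        rw [show (1 - k ^ 2 / 8) ^ 4 = ((1 - k ^ 2 / 8) ^ 2) ^ 2 by ring]
        gcongr
    _ ≤ 7 / 10 := by
        nlinarith [sq_nonneg (k - 1), pow_nonneg hk0 3, pow_nonneg hk0 5, pow_nonneg hk0 7]

lemma mul_sq_J0_le {k : ℝ} (hk : 0 < k) : k * J0 k ^ 2 ≤ 7 / 10 := by
  rcases le_total k (3 / 2) with hsmall | hlarge
  · exact mul_sq_J0_le_of_le_three_halves hk.le hsmall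
  · calc k * J0 k ^ 2 ≤ besselEnergy k := mul_sq_J0_le_besselEnergy hk
      _ ≤ besselEnergy (3 / 2) :=
        besselEnergy_antitoneOn (by norm_num : (0 : ℝ) < 3 / 2) (hk : k ∈ Set.Ioi 0) hlarge
      _ ≤ 7 / 10 := besselEnergy_three_halves_le

lemma abs_le_one_div_rpow_mul_sqrt {a k : ℝ} (hk : 0 < k) (h : √2 * (k * a ^ 2) ≤ 1) :
    |a| ≤ 1 / (2 ^ (1 / 4 : ℝ) * √k) := by
  have hsq : (2 ^ (1 / 4 : ℝ) * √k) ^ 2 = √2 * k := by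
    rw [mul_pow, sq_sqrt hk.le, ← rpow_natCast, ← rpow_mul zero_le_two, sqrt_eq_rpow]
    norm_num
  have hpos : 0 < 2 ^ (1 / 4 : ℝ) * √k := by positivity
  rw [le_div_iff₀ hpos, ← abs_of_pos hpos, ← abs_mul, ← sq_le_one_iff_abs_le_one, mul_pow, hsq]
  linarith

theorem J0_bound :
    (∀ k : ℝ, |J0 k| ≤ 1) ∧
    (∀ k : ℝ, 0 < k →
      |J0 k| ≤ min 1 (1 / ((2:ℝ) ^ ((1:ℝ)/4) * Real.sqrt k))) := by
  refine ⟨abs_J0_le_one, fun k hk => le_min (abs_J0_le_one k) ?_⟩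
  refine abs_le_one_div_rpow_mul_sqrt hk ?_
  have hsqrt2 : √2 ≤ 10 / 7 := by
    rw [sqrt_le_left (by norm_num)]; norm_num
  nlinarith [mul_sq_J0_le hk, sqrt_nonneg 2]
end

section
/- For every real k, |(J⁰)'(k)| ≤ (1 + k²)^(-1/4). -/
open MeasureTheory Real

/-!
Let `S(k) = ∫₀^π cos θ sin (k cos θ) dθ`, so that `(J⁰)' = -S/π` (and `S = π J₁`).
For `k ≤ 4/3` the crude bound `|sin x| ≤ |x|` gives `|S(k)| ≤ πk/2`, which suffices.
For larger `k` we use that `S` solves Bessel's equation `k² S'' + k S' + (k² - 1) S = 0`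
(integrate by parts, then differentiate under the integral sign). Along any solution `y` the
Lyapunov function `E = k y² + k (2k y' + y)² / (4k² - 3)` is non-increasing for `k ≥ 1`, so
`k S(k)² ≤ E(4/3) ≤ 4π²/5`; the last bound comes from Taylor bounds for `sin` and `cos` under the
integral sign. Hence `S⁴ (1 + k²) ≤ (16/25) π⁴ (1 + k²)/k² ≤ π⁴` for `k ≥ 4/3`.
-/

open Set Filter intervalIntegral

lemma mul_apply_nonneg_of_monotone {α : Type*} [Ring α] [LinearOrder α] [IsOrderedRing α]
    {f : α → α} (hf : Monotone f) (h0 : f 0 = 0) (x : α) :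
    0 ≤ x * f x := by
  rcases le_total 0 x with hx | hx
  · exact mul_nonneg hx (h0 ▸ hf hx)
  · exact mul_nonneg_of_nonpos_of_nonpos hx (h0 ▸ hf hx)

lemma taylor_le_mul_sin_self (x : ℝ) : x ^ 2 - x ^ 4 / 6 ≤ x * sin x := by
  have hmono : Monotone fun t => sin t - (t - t ^ 3 / 6) := by
    refine monotone_of_deriv_nonneg (by fun_prop) fun t => ?_
    simp (disch := fun_prop) only [deriv_fun_sub, deriv_div_const, deriv_fun_pow, deriv_id'',
      Real.deriv_sin, Nat.cast_ofNat, Nat.add_one_sub_one]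
    linarith [one_sub_sq_div_two_le_cos (x := t)]
  linear_combination mul_apply_nonneg_of_monotone hmono (by simp) x

lemma cos_le_taylor (x : ℝ) : cos x ≤ 1 - x ^ 2 / 2 + x ^ 4 / 24 := by
  wlog hx : 0 ≤ x
  · have := this (-x) (by linarith)
    rwa [cos_neg, neg_sq, Even.neg_pow (by decide)] at this
  have hmono : MonotoneOn (fun t => 1 - t ^ 2 / 2 + t ^ 4 / 24 - cos t) (Ici 0) := by
    refine monotoneOn_of_deriv_nonneg (convex_Ici 0) (by fun_prop) (by fun_prop) fun t ht => ?_
    rw [interior_Ici] at ht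
    simp (disch := fun_prop) only [deriv_fun_sub, deriv_fun_add, deriv_const', deriv_div_const,
      deriv_fun_pow, deriv_id'', deriv_cos', Nat.cast_ofNat, Nat.add_one_sub_one]
    linarith [sin_ge_sub_cube (le_of_lt ht)]
  simpa using hmono self_mem_Ici hx hx

lemma mul_sin_self_le_taylor (x : ℝ) : x * sin x ≤ x ^ 2 - x ^ 4 / 6 + x ^ 6 / 120 := by
  have hmono : Monotone fun t => t - t ^ 3 / 6 + t ^ 5 / 120 - sin t := by
    refine monotone_of_deriv_nonneg (by fun_prop) fun t => ?_
    simp (disch := fun_prop) only [deriv_fun_sub, deriv_fun_add, deriv_div_const, deriv_fun_pow,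
      deriv_id'', Real.deriv_sin, Nat.cast_ofNat, Nat.add_one_sub_one]
    linarith [cos_le_taylor t]
  linear_combination mul_apply_nonneg_of_monotone hmono (by simp) x

noncomputable def cosPowIntegral (f : ℝ → ℝ) (n : ℕ) (k : ℝ) : ℝ :=
  ∫ θ in (0:ℝ)..π, cos θ ^ n * f (k * cos θ)

lemma hasDerivAt_cosPowIntegral {f f' : ℝ → ℝ} {C : ℝ} (hf : ∀ x, HasDerivAt f (f' x) x)
    (hf' : Continuous f') (hC : ∀ x, |f' x| ≤ C) (n : ℕ) (k : ℝ) :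
    HasDerivAt (cosPowIntegral f n) (cosPowIntegral f' (n + 1) k) k := by
  have hfc : Continuous f := continuous_iff_continuousAt.2 fun x => (hf x).continuousAt
  refine (hasDerivAt_integral_of_dominated_loc_of_deriv_le
    (F := fun k θ => cos θ ^ n * f (k * cos θ)) (F' := fun k θ => cos θ ^ (n + 1) * f' (k * cos θ))
    (bound := fun _ => C) univ_mem
    (Eventually.of_forall fun _ => (by fun_prop : Continuous _).aestronglyMeasurable)
    ((by fun_prop : Continuous _).intervalIntegrable _ _)
    (by fun_prop : Continuous _).aestronglyMeasurable
    (ae_of_all _ fun θ _ x _ => ?_) intervalIntegrable_const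
    (ae_of_all _ fun θ _ x _ => ?_)).2
  · rw [norm_mul, norm_pow, Real.norm_eq_abs, Real.norm_eq_abs]
    exact (mul_le_mul (pow_le_one₀ (abs_nonneg _) (abs_cos_le_one θ)) (hC _) (abs_nonneg _)
      zero_le_one).trans_eq (one_mul C)
  · have := ((hf (x * cos θ)).comp x ((hasDerivAt_id x).mul_const (cos θ))).const_mul (cos θ ^ n)
    exact this.congr_deriv (by ring)

lemma hasDerivAt_cosPowIntegral_sin (n : ℕ) (k : ℝ) :
    HasDerivAt (cosPowIntegral sin n) (cosPowIntegral cos (n + 1) k) k :=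
  hasDerivAt_cosPowIntegral hasDerivAt_sin continuous_cos abs_cos_le_one n k

lemma hasDerivAt_cosPowIntegral_cos (n : ℕ) (k : ℝ) :
    HasDerivAt (cosPowIntegral cos n) (-cosPowIntegral sin (n + 1) k) k := by
  have := hasDerivAt_cosPowIntegral hasDerivAt_cos continuous_sin.neg
    (fun x => (abs_neg (sin x)).trans_le (abs_sin_le_one x)) n k
  simpa only [cosPowIntegral, mul_neg, intervalIntegral.integral_neg] using this

lemma cosPowIntegral_sin_one (k : ℝ) :
    cosPowIntegral sin 1 k = k * (cosPowIntegral cos 0 k - cosPowIntegral cos 2 k) := by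
  have hderiv : ∀ θ ∈ uIcc 0 π, HasDerivAt (fun θ => sin θ * sin (k * cos θ))
      (cos θ ^ 1 * sin (k * cos θ) -
        k * (cos θ ^ 0 * cos (k * cos θ) - cos θ ^ 2 * cos (k * cos θ))) θ := fun θ _ => by
    have := (hasDerivAt_sin θ).mul ((hasDerivAt_sin _).comp θ ((hasDerivAt_cos θ).const_mul k))
    refine this.congr_deriv ?_
    simp only [Function.comp_apply]
    linear_combination (-(k * cos (k * cos θ))) * sin_sq θ
  have hint : ∀ m, IntervalIntegrable (fun θ => cos θ ^ m * cos (k * cos θ)) volume 0 π :=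
    fun m => (by fun_prop : Continuous _).intervalIntegrable _ _
  have hftc := integral_eq_sub_of_hasDerivAt hderiv
    ((by fun_prop : Continuous _).intervalIntegrable _ _)
  rw [intervalIntegral.integral_sub ((by fun_prop : Continuous _).intervalIntegrable _ _)
    (((hint 0).sub (hint 2)).const_mul k), intervalIntegral.integral_const_mul,
    intervalIntegral.integral_sub (hint 0) (hint 2)] at hftc
  simp only [sin_pi, sin_zero, zero_mul, sub_zero] at hftc
  unfold cosPowIntegral
  linarith

lemma cosPowIntegral_bessel_ode (k : ℝ) :
    k ^ 2 * -cosPowIntegral sin 3 k + k * cosPowIntegral cos 2 k +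
      (k ^ 2 - 1) * cosPowIntegral sin 1 k = 0 := by
  have hrhs : HasDerivAt (fun k => k * (cosPowIntegral cos 0 k - cosPowIntegral cos 2 k))
      (1 * (cosPowIntegral cos 0 k - cosPowIntegral cos 2 k) +
        k * (-cosPowIntegral sin 1 k - -cosPowIntegral sin 3 k)) k :=
    (hasDerivAt_id k).mul
      ((hasDerivAt_cosPowIntegral_cos 0 k).sub (hasDerivAt_cosPowIntegral_cos 2 k))
  have hlhs := hasDerivAt_cosPowIntegral_sin 1 k
  rw [funext cosPowIntegral_sin_one] at hlhs
  linear_combination k * hlhs.unique hrhs - cosPowIntegral_sin_one k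

noncomputable def besselLyapunov (y y' : ℝ → ℝ) (k : ℝ) : ℝ :=
  k * y k ^ 2 + k * (2 * k * y' k + y k) ^ 2 / (4 * k ^ 2 - 3)

section besselLyapunov

variable {y y' y'' : ℝ → ℝ}

lemma hasDerivAt_besselLyapunov {k : ℝ} (hy : HasDerivAt y (y' k) k)
    (hy' : HasDerivAt y' (y'' k) k) (hode : k ^ 2 * y'' k + k * y' k + (k ^ 2 - 1) * y k = 0)
    (hk : 4 * k ^ 2 - 3 ≠ 0) :
    HasDerivAt (besselLyapunov y y') (-6 * (2 * k * y' k + y k) ^ 2 / (4 * k ^ 2 - 3) ^ 2) k := by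
  have hu : HasDerivAt (fun k => 2 * k * y' k + y k) (2 * y' k + 2 * k * y'' k + y' k) k :=
    ((((hasDerivAt_id' k).const_mul 2).mul hy').add hy).congr_deriv (by ring)
  have hD : HasDerivAt (fun k => 4 * k ^ 2 - 3) (8 * k) k :=
    (((hasDerivAt_pow 2 k).const_mul 4).sub_const 3).congr_deriv (by ring)
  have hA : HasDerivAt (fun k => k * y k ^ 2) (y k ^ 2 + k * (2 * y k * y' k)) k :=
    ((hasDerivAt_id' k).mul (hy.fun_pow 2)).congr_deriv (by ring)
  have hB : HasDerivAt (fun k => k * (2 * k * y' k + y k) ^ 2)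
      ((2 * k * y' k + y k) ^ 2 +
        k * (2 * (2 * k * y' k + y k) * (2 * y' k + 2 * k * y'' k + y' k))) k :=
    ((hasDerivAt_id' k).mul (hu.fun_pow 2)).congr_deriv (by ring)
  refine (hA.add (hB.div hD hk)).congr_deriv ?_
  rw [eq_div_iff (pow_ne_zero 2 hk), add_mul, div_mul_cancel₀ _ (pow_ne_zero 2 hk)]
  linear_combination 4 * (2 * k * y' k + y k) * (4 * k ^ 2 - 3) * hode

lemma antitoneOn_besselLyapunov (hy : ∀ k, HasDerivAt y (y' k) k)
    (hy' : ∀ k, HasDerivAt y' (y'' k) k)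
    (hode : ∀ k, k ^ 2 * y'' k + k * y' k + (k ^ 2 - 1) * y k = 0) :
    AntitoneOn (besselLyapunov y y') (Ici 1) := by
  have hderiv : ∀ k ∈ Ici (1 : ℝ), HasDerivAt (besselLyapunov y y')
      (-6 * (2 * k * y' k + y k) ^ 2 / (4 * k ^ 2 - 3) ^ 2) k := fun k hk =>
    hasDerivAt_besselLyapunov (hy k) (hy' k) (hode k) (by nlinarith [hk.out])
  refine antitoneOn_of_deriv_nonpos (convex_Ici 1)
    (fun k hk => (hderiv k hk).continuousAt.continuousWithinAt)
    (fun k hk => (hderiv k (interior_subset hk)).differentiableAt.differentiableWithinAt)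
    fun k hk => ?_
  rw [(hderiv k (interior_subset hk)).deriv]
  exact div_nonpos_of_nonpos_of_nonneg (by nlinarith [sq_nonneg (2 * k * y' k + y k)])
    (sq_nonneg _)

lemma mul_sq_le_besselLyapunov {k : ℝ} (hk : 1 ≤ k) : k * y k ^ 2 ≤ besselLyapunov y y' k :=
  le_add_of_nonneg_right (div_nonneg (by positivity) (by nlinarith))

end besselLyapunov

lemma integral_cos_pow_two_four_six (a b c : ℝ) :
    ∫ θ in (0:ℝ)..π, (a * cos θ ^ 2 + b * cos θ ^ 4 + c * cos θ ^ 6) =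
      π * (a / 2 + 3 * b / 8 + 5 * c / 16) := by
  have h2 : ∫ θ in (0:ℝ)..π, cos θ ^ 2 = π / 2 := by simp
  have h4 : ∫ θ in (0:ℝ)..π, cos θ ^ 4 = 3 * π / 8 := by
    rw [integral_cos_pow (n := 2), h2]; simp; ring
  have h6 : ∫ θ in (0:ℝ)..π, cos θ ^ 6 = 5 * π / 16 := by
    rw [integral_cos_pow (n := 4), h4]; simp; ring
  have hint : ∀ m : ℕ, IntervalIntegrable (fun θ => cos θ ^ m) volume 0 π :=
    fun m => (by fun_prop : Continuous _).intervalIntegrable _ _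
  rw [intervalIntegral.integral_add (((hint 2).const_mul a).add ((hint 4).const_mul b))
      ((hint 6).const_mul c),
    intervalIntegral.integral_add ((hint 2).const_mul a) ((hint 4).const_mul b),
    intervalIntegral.integral_const_mul, intervalIntegral.integral_const_mul,
    intervalIntegral.integral_const_mul, h2, h4, h6]
  ring

lemma mul_cosPowIntegral_sin_one_bounds (k : ℝ) :
    π * (k ^ 2 / 2 - k ^ 4 / 16) ≤ k * cosPowIntegral sin 1 k ∧
      k * cosPowIntegral sin 1 k ≤ π * (k ^ 2 / 2 - k ^ 4 / 16 + k ^ 6 / 384) := by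
  have hmul : k * cosPowIntegral sin 1 k = ∫ θ in (0:ℝ)..π, k * cos θ * sin (k * cos θ) := by
    rw [cosPowIntegral, ← intervalIntegral.integral_const_mul]
    simp only [pow_one, mul_assoc]
  have hint : ∀ a b c : ℝ, IntervalIntegrable
      (fun θ => a * cos θ ^ 2 + b * cos θ ^ 4 + c * cos θ ^ 6) volume 0 π :=
    fun a b c => (by fun_prop : Continuous _).intervalIntegrable _ _
  have hint' : IntervalIntegrable (fun θ => k * cos θ * sin (k * cos θ)) volume 0 π :=
    (by fun_prop : Continuous _).intervalIntegrable _ _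
  rw [hmul]
  constructor
  · convert integral_mono pi_pos.le (hint (k ^ 2) (-k ^ 4 / 6) 0) hint'
      fun θ => by linear_combination taylor_le_mul_sin_self (k * cos θ) using 1
    rw [integral_cos_pow_two_four_six]; ring
  · convert integral_mono pi_pos.le hint' (hint (k ^ 2) (-k ^ 4 / 6) (k ^ 6 / 120))
      fun θ => by linear_combination mul_sin_self_le_taylor (k * cos θ) using 1
    rw [integral_cos_pow_two_four_six]; ring

lemma cosPowIntegral_cos_two_bounds (k : ℝ) :
    π * (1 / 2 - 3 * k ^ 2 / 16) ≤ cosPowIntegral cos 2 k ∧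
      cosPowIntegral cos 2 k ≤ π * (1 / 2 - 3 * k ^ 2 / 16 + 5 * k ^ 4 / 384) := by
  have hint : ∀ a b c : ℝ, IntervalIntegrable
      (fun θ => a * cos θ ^ 2 + b * cos θ ^ 4 + c * cos θ ^ 6) volume 0 π :=
    fun a b c => (by fun_prop : Continuous _).intervalIntegrable _ _
  have hint' : IntervalIntegrable (fun θ => cos θ ^ 2 * cos (k * cos θ)) volume 0 π :=
    (by fun_prop : Continuous _).intervalIntegrable _ _
  unfold cosPowIntegral
  constructor
  · convert integral_mono pi_pos.le (hint 1 (-k ^ 2 / 2) 0) hint'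
      fun θ => by linear_combination cos θ ^ 2 * one_sub_sq_div_two_le_cos (x := k * cos θ) using 1
    rw [integral_cos_pow_two_four_six]; ring
  · convert integral_mono pi_pos.le hint' (hint 1 (-k ^ 2 / 2) (k ^ 4 / 24))
      fun θ => by linear_combination cos θ ^ 2 * cos_le_taylor (k * cos θ) using 1
    rw [integral_cos_pow_two_four_six]; ring

lemma besselLyapunov_four_thirds_le :
    besselLyapunov (cosPowIntegral sin 1) (cosPowIntegral cos 2) (4 / 3) ≤ 4 * π ^ 2 / 5 := by
  obtain ⟨hS₁, hS₂⟩ := mul_cosPowIntegral_sin_one_bounds (4 / 3)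
  obtain ⟨hC₁, hC₂⟩ := cosPowIntegral_cos_two_bounds (4 / 3)
  set S := cosPowIntegral sin 1 (4 / 3)
  set C := cosPowIntegral cos 2 (4 / 3)
  have hpi := pi_pos
  -- the Taylor bounds give `S/π ≤ 0.53` and `C/π ≤ 0.21`; then `4/3 · 0.53² + 12/37 · 1.09² < 4/5`
  have hS : 0 ≤ S ∧ S ≤ π * (53 / 100) := by constructor <;> nlinarith
  have hu : 0 ≤ 8 / 3 * C + S ∧ 8 / 3 * C + S ≤ π * (109 / 100) := by constructor <;> nlinarith
  have hE : besselLyapunov (cosPowIntegral sin 1) (cosPowIntegral cos 2) (4 / 3) =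
      4 / 3 * S ^ 2 + 12 / 37 * (8 / 3 * C + S) ^ 2 := by
    rw [besselLyapunov]; ring
  rw [hE]
  nlinarith [mul_le_mul hS.2 hS.2 hS.1 (by positivity), mul_le_mul hu.2 hu.2 hu.1 (by positivity)]

lemma deriv_J0 (k : ℝ) : deriv J0 k = -(cosPowIntegral sin 1 k / π) := by
  have hJ0 : J0 = fun k => 1 / π * cosPowIntegral cos 0 k := by
    ext k; simp only [J0, cosPowIntegral, pow_zero, one_mul]
  rw [hJ0, ((hasDerivAt_cosPowIntegral_cos 0 k).const_mul (1 / π)).deriv]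
  ring

lemma cosPowIntegral_sin_one_neg (k : ℝ) :
    cosPowIntegral sin 1 (-k) = -cosPowIntegral sin 1 k := by
  simp only [cosPowIntegral, neg_mul, sin_neg, mul_neg, intervalIntegral.integral_neg]

lemma abs_cosPowIntegral_sin_one_le (k : ℝ) : |cosPowIntegral sin 1 k| ≤ π * |k| / 2 := by
  have := norm_integral_le_of_norm_le (μ := volume) pi_pos.le
    (f := fun θ => cos θ ^ 1 * sin (k * cos θ)) (ae_of_all _ fun θ _ => ?_)
    ((by fun_prop : Continuous fun θ => |k| * cos θ ^ 2).intervalIntegrable 0 π)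
  · rwa [intervalIntegral.integral_const_mul, integral_cos_sq, cos_pi, sin_pi, cos_zero, sin_zero,
      Real.norm_eq_abs, show |k| * ((-1 * 0 - 1 * 0 + π - 0) / 2) = π * |k| / 2 by ring] at this
  · rw [Real.norm_eq_abs, abs_mul, pow_one]
    calc |cos θ| * |sin (k * cos θ)| ≤ |cos θ| * |k * cos θ| :=
          mul_le_mul_of_nonneg_left abs_sin_le_abs (abs_nonneg _)
      _ = |k| * cos θ ^ 2 := by rw [abs_mul, ← sq_abs (cos θ)]; ring

lemma cosPowIntegral_sin_one_pow_four_mul_le_of_le {k : ℝ} (hk : 0 ≤ k) (hk' : k ≤ 4 / 3) :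
    cosPowIntegral sin 1 k ^ 4 * (1 + k ^ 2) ≤ π ^ 4 := by
  have hS : cosPowIntegral sin 1 k ^ 4 ≤ (π * k / 2) ^ 4 := by
    have := pow_le_pow_left₀ (abs_nonneg _) (abs_cosPowIntegral_sin_one_le k) 4
    rwa [Even.pow_abs (by decide), abs_of_nonneg hk] at this
  calc cosPowIntegral sin 1 k ^ 4 * (1 + k ^ 2) ≤ (π * k / 2) ^ 4 * (1 + k ^ 2) := by gcongr
    _ ≤ (π * (4 / 3) / 2) ^ 4 * (1 + (4 / 3) ^ 2) := by gcongr
    _ = π ^ 4 * (400 / 729) := by ring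
    _ ≤ π ^ 4 := mul_le_of_le_one_right (by positivity) (by norm_num)

lemma mul_cosPowIntegral_sin_one_sq_le {k : ℝ} (hk : 4 / 3 ≤ k) :
    k * cosPowIntegral sin 1 k ^ 2 ≤ 4 * π ^ 2 / 5 :=
  calc k * cosPowIntegral sin 1 k ^ 2
      ≤ besselLyapunov (cosPowIntegral sin 1) (cosPowIntegral cos 2) k :=
        mul_sq_le_besselLyapunov (by linarith)
    _ ≤ besselLyapunov (cosPowIntegral sin 1) (cosPowIntegral cos 2) (4 / 3) :=
        antitoneOn_besselLyapunov (y'' := fun k => -cosPowIntegral sin 3 k)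
          (hasDerivAt_cosPowIntegral_sin 1) (hasDerivAt_cosPowIntegral_cos 2)
          cosPowIntegral_bessel_ode (by norm_num) ((by norm_num : (1 : ℝ) ≤ 4 / 3).trans hk) hk
    _ ≤ 4 * π ^ 2 / 5 := besselLyapunov_four_thirds_le

lemma cosPowIntegral_sin_one_pow_four_mul_le {k : ℝ} (hk : 0 ≤ k) :
    cosPowIntegral sin 1 k ^ 4 * (1 + k ^ 2) ≤ π ^ 4 := by
  rcases le_total k (4 / 3) with hk' | hk'
  · exact cosPowIntegral_sin_one_pow_four_mul_le_of_le hk hk'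
  calc cosPowIntegral sin 1 k ^ 4 * (1 + k ^ 2)
      ≤ cosPowIntegral sin 1 k ^ 4 * (25 / 16 * k ^ 2) := by gcongr; nlinarith
    _ = 25 / 16 * (k * cosPowIntegral sin 1 k ^ 2) ^ 2 := by ring
    _ ≤ 25 / 16 * (4 * π ^ 2 / 5) ^ 2 := by gcongr; exact mul_cosPowIntegral_sin_one_sq_le hk'
    _ = π ^ 4 := by ring

lemma le_rpow_neg_inv_of_pow_mul_le {v t : ℝ} {n : ℕ} (hn : n ≠ 0) (hv : 0 ≤ v) (ht : 0 < t)
    (h : v ^ n * t ≤ 1) : v ≤ t ^ (-(1 : ℝ) / n) := by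
  rw [neg_div, rpow_neg ht.le, ← inv_rpow ht.le, one_div,
    le_rpow_inv_iff_of_pos hv (inv_nonneg.2 ht.le) (by positivity), rpow_natCast,
    ← one_div, le_div_iff₀ ht]
  exact h

theorem J0_deriv_decay_bound (k : ℝ) : |deriv J0 k| ≤ (1 + k ^ 2) ^ (-(1:ℝ)/4) := by
  have key : |deriv J0 k| ^ 4 * (1 + k ^ 2) ≤ 1 := by
    have habs : |cosPowIntegral sin 1 k| = |cosPowIntegral sin 1 (|k|)| := by
      rcases abs_choice k with h | h <;> rw [h]
      rw [cosPowIntegral_sin_one_neg, abs_neg]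
    rw [deriv_J0, abs_neg, abs_div, abs_of_pos pi_pos, div_pow, div_mul_eq_mul_div,
      div_le_one (by positivity), habs, pow_abs, abs_of_nonneg (by positivity), ← sq_abs k]
    exact cosPowIntegral_sin_one_pow_four_mul_le (abs_nonneg k)
  exact_mod_cast le_rpow_neg_inv_of_pow_mul_le four_ne_zero (abs_nonneg _) (by positivity) key
end

section
/- For every k with 0 ≤ k ≤ √2, k · (J⁰(k))² ≥ k − k³/2 (equivalently (J⁰(k))² ≥ 1 − k²/2 on this range). -/
/-! Averaging `1 - x²/2 ≤ cos x` at `x = k cos θ` over `θ ∈ [0, π]`, where `cos² θ` has mean `1/2`,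
gives `1 - k²/4 ≤ J⁰(k)`. For `k² ≤ 4` this lower bound is nonnegative, so it may be squared, and
`(1 - k²/4)² = 1 - k²/2 + k⁴/16`. -/

open MeasureTheory Real

lemma integral_one_sub_mul_cos_sq_div_two (k : ℝ) :
    ∫ θ in (0:ℝ)..π, (1 - k ^ 2 * cos θ ^ 2 / 2) = π * (1 - k ^ 2 / 4) := by
  have hcos_sq : IntervalIntegrable (fun θ => k ^ 2 * cos θ ^ 2 / 2) volume 0 π :=
    ((continuous_const.mul (continuous_cos.pow 2)).div_const 2).intervalIntegrable _ _
  rw [intervalIntegral.integral_sub intervalIntegrable_const hcos_sq,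
    intervalIntegral.integral_div, intervalIntegral.integral_const_mul, integral_cos_sq]
  simp only [intervalIntegral.integral_const, sub_zero, smul_eq_mul, mul_one, sin_pi, sin_zero,
    mul_zero]
  ring

lemma one_sub_sq_div_four_le_J0 (k : ℝ) : 1 - k ^ 2 / 4 ≤ J0 k := by
  have hmono : ∫ θ in (0:ℝ)..π, (1 - k ^ 2 * cos θ ^ 2 / 2) ≤ ∫ θ in (0:ℝ)..π, cos (k * cos θ) := by
    refine intervalIntegral.integral_mono_on pi_pos.le ?_ ?_ fun θ _ => ?_
    · exact (continuous_const.sub ((continuous_const.mul (continuous_cos.pow 2)).div_const 2)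
        ).intervalIntegrable _ _
    · exact (continuous_cos.comp (continuous_const.mul continuous_cos)).intervalIntegrable _ _
    · simpa only [mul_pow] using one_sub_sq_div_two_le_cos (x := k * cos θ)
  rw [integral_one_sub_mul_cos_sq_div_two] at hmono
  rw [J0, one_div, ← div_le_iff₀' (inv_pos.mpr pi_pos), div_inv_eq_mul, mul_comm]
  exact hmono

lemma one_sub_sq_div_two_le_J0_sq {k : ℝ} (hk : k ^ 2 ≤ 4) : 1 - k ^ 2 / 2 ≤ J0 k ^ 2 :=
  calc 1 - k ^ 2 / 2 ≤ (1 - k ^ 2 / 4) ^ 2 := by nlinarith [sq_nonneg (k ^ 2)]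
    _ ≤ J0 k ^ 2 := pow_le_pow_left₀ (by linarith) (one_sub_sq_div_four_le_J0 k) 2

theorem J0_sq_lower_bound (k : ℝ) (hk0 : 0 ≤ k) (hk2 : k ≤ Real.sqrt 2) :
    k - k ^ 3 / 2 ≤ k * (J0 k) ^ 2 := by
  have hk_sq : k ^ 2 ≤ 2 := by
    simpa [sq_sqrt zero_le_two] using pow_le_pow_left₀ hk0 hk2 2
  calc k - k ^ 3 / 2 = k * (1 - k ^ 2 / 2) := by ring
    _ ≤ k * J0 k ^ 2 := mul_le_mul_of_nonneg_left (one_sub_sq_div_two_le_J0_sq (by linarith)) hk0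
end

section
/- For every k with 0 ≤ k ≤ 2, J⁰(k) ≤ 1 − k²/4 + k⁴/64. -/
open MeasureTheory Real

/-! Integrating the fourth-order Taylor bound `cos x ≤ 1 - x²/2 + x⁴/24`, valid for every real `x`,
at `x = k cos θ` and using `∫₀^π cos² = π/2`, `∫₀^π cos⁴ = 3π/8` gives the claim. -/

namespace Real

theorem cos_le_one_sub_sq_div_two_add_pow_four_div (x : ℝ) :
    cos x ≤ 1 - x ^ 2 / 2 + x ^ 4 / 24 := by
  wlog hx : 0 ≤ x
  · simpa [Even.neg_pow (by decide : Even 4)] using this (-x) (by linarith)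
  let f (t : ℝ) : ℝ := 1 - t ^ 2 / 2 + t ^ 4 / 24 - cos t
  have hderiv (t : ℝ) : deriv f t = sin t - (t - t ^ 3 / 6) := by
    simp (disch := fun_prop) only [f, deriv_fun_sub, deriv_fun_add, deriv_const', deriv_div_const,
      deriv_fun_pow, deriv_id'', deriv_cos']
    ring
  have hmono : MonotoneOn f (Set.Ici 0) := by
    apply monotoneOn_of_deriv_nonneg (convex_Ici 0) (by fun_prop) (by fun_prop)
    intro t ht
    rw [interior_Ici] at ht
    rw [hderiv, sub_nonneg]
    exact sin_ge_sub_cube ht.le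
  have h0 : f 0 ≤ f x := hmono Set.self_mem_Ici hx hx
  simpa [f] using h0

theorem integral_cos_sq_zero_pi : ∫ θ in (0:ℝ)..π, cos θ ^ 2 = π / 2 := by
  simp [integral_cos_sq]

theorem integral_cos_pow_four_zero_pi : ∫ θ in (0:ℝ)..π, cos θ ^ 4 = 3 * π / 8 := by
  have h := integral_cos_pow (a := 0) (b := π) 2
  norm_num [integral_cos_sq_zero_pi] at h
  rw [h]
  ring

end Real

theorem integral_cos_taylor_quartic_mul_cos (k : ℝ) :
    ∫ θ in (0:ℝ)..π, (1 - (k * cos θ) ^ 2 / 2 + (k * cos θ) ^ 4 / 24)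
      = π * (1 - k ^ 2 / 4 + k ^ 4 / 64) := by
  simp_rw [mul_pow]
  rw [intervalIntegral.integral_add, intervalIntegral.integral_sub,
    intervalIntegral.integral_div, intervalIntegral.integral_div,
    intervalIntegral.integral_const_mul, intervalIntegral.integral_const_mul,
    integral_cos_sq_zero_pi, integral_cos_pow_four_zero_pi]
  · simp only [intervalIntegral.integral_const, sub_zero, smul_eq_mul, mul_one]
    ring
  all_goals apply Continuous.intervalIntegrable; fun_prop

theorem J0_upper_bound_small_general (k : ℝ) :
    J0 k ≤ 1 - k ^ 2 / 4 + k ^ 4 / 64 := by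
  have hmono : ∫ θ in (0:ℝ)..π, cos (k * cos θ)
      ≤ ∫ θ in (0:ℝ)..π, (1 - (k * cos θ) ^ 2 / 2 + (k * cos θ) ^ 4 / 24) :=
    intervalIntegral.integral_mono_on pi_pos.le
      (by apply Continuous.intervalIntegrable; fun_prop)
      (by apply Continuous.intervalIntegrable; fun_prop)
      (fun θ _ => cos_le_one_sub_sq_div_two_add_pow_four_div _)
  rw [integral_cos_taylor_quartic_mul_cos] at hmono
  calc J0 k ≤ (1 / π) * (π * (1 - k ^ 2 / 4 + k ^ 4 / 64)) :=
        mul_le_mul_of_nonneg_left hmono (by positivity)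
    _ = 1 - k ^ 2 / 4 + k ^ 4 / 64 := by field_simp

theorem J0_upper_bound_small (k : ℝ) (hk0 : 0 ≤ k) (hk2 : k ≤ 2) :
    J0 k ≤ 1 - k ^ 2 / 4 + k ^ 4 / 64 :=
  J0_upper_bound_small_general k
end

section
/- For every continuously differentiable, compactly supported function F : ℝ² → ℝ, ∫_{ℝ²} F(v)² / ‖v‖ dv ≤ 2 · ( ∫_{ℝ²} ‖∇F(v)‖² dv )^{1/2} · ( ∫_{ℝ²} F(v)² dv )^{1/2}, where ‖v‖ is the Euclidean norm on ℝ² and ∇F is the gradient of F. -/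
/-!
For `v ≠ 0`, integrating the derivative of `t ↦ F (t • v) ^ 2` along the ray `t ≥ 1` gives
`F v ^ 2 ≤ ‖v‖ ∫_{t > 1} ‖D(F²)(t • v)‖ dt`. Integrating over `v` and exchanging the integrals,
the substitution `v ↦ t • v` in dimension `n` produces the factor `∫_{t > 1} t⁻ⁿ dt = 1 / (n - 1)`,
which equals `1` in the plane. Hence `∫ F² / ‖v‖ ≤ ∫ ‖D(F²)‖ = 2 ∫ |F| ‖∇F‖`, and Cauchy–Schwarz
concludes.
-/

open MeasureTheory Real Set Module
open scoped ENNReal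

section

variable {E G : Type*} [NormedAddCommGroup E] [NormedSpace ℝ E]
  [NormedAddCommGroup G] [NormedSpace ℝ G] [CompleteSpace G]

theorem HasCompactSupport.enorm_le_mul_lintegral_enorm_fderiv_smul {g : E → G}
    (hg : ContDiff ℝ 1 g) (hs : HasCompactSupport g) {v : E} (hv : v ≠ 0) :
    ‖g v‖ₑ ≤ ‖v‖ₑ * ∫⁻ t in Ioi (1 : ℝ), ‖fderiv ℝ g (t • v)‖ₑ := by
  set φ : ℝ → G := fun t => g (t • v)
  have hφ : ContDiff ℝ 1 φ := hg.comp (contDiff_id.smul contDiff_const)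
  have hφs : HasCompactSupport φ := hs.comp_isClosedEmbedding (isClosedEmbedding_smul_left hv)
  have hderiv (t : ℝ) : deriv φ t = fderiv ℝ g (t • v) v := by
    have h := ((hg.differentiable one_ne_zero _).hasFDerivAt.comp_hasDerivAt t
      ((hasDerivAt_id t).smul_const v)).deriv
    simp only [id, one_smul] at h
    exact h
  calc ‖g v‖ₑ = ‖∫ t in Ioi (1 : ℝ), deriv φ t‖ₑ := by
        rw [hφs.integral_Ioi_deriv_eq hφ, enorm_neg]
        simp [φ]
    _ ≤ ∫⁻ t in Ioi (1 : ℝ), ‖fderiv ℝ g (t • v)‖ₑ * ‖v‖ₑ := by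
        refine (enorm_integral_le_lintegral_enorm _).trans (lintegral_mono fun t => ?_)
        rw [hderiv]
        exact ContinuousLinearMap.le_opENorm _ _
    _ = ‖v‖ₑ * ∫⁻ t in Ioi (1 : ℝ), ‖fderiv ℝ g (t • v)‖ₑ := by
        rw [lintegral_mul_const' _ _ enorm_ne_top, mul_comm]

end

section

variable {E G : Type*} [NormedAddCommGroup E] [NormedSpace ℝ E] [MeasurableSpace E]
  [BorelSpace E] [FiniteDimensional ℝ E] (μ : Measure E) [μ.IsAddHaarMeasure]
  [NormedAddCommGroup G] [NormedSpace ℝ G] [CompleteSpace G]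

theorem MeasureTheory.Measure.lintegral_comp_smul (f : E → ℝ≥0∞) {R : ℝ} (hR : R ≠ 0) :
    ∫⁻ x, f (R • x) ∂μ = ENNReal.ofReal |(R ^ finrank ℝ E)⁻¹| * ∫⁻ x, f x ∂μ := by
  rw [← smul_eq_mul, ← lintegral_smul_measure, ← Measure.map_addHaar_smul μ hR]
  exact (lintegral_map_equiv f (Homeomorph.smulOfNeZero R hR).toMeasurableEquiv).symm

theorem lintegral_Ioi_one_inv_pow {n : ℕ} (hn : 1 < n) :
    ∫⁻ t in Ioi (1 : ℝ), ENNReal.ofReal (t ^ n)⁻¹ = ENNReal.ofReal (n - 1 : ℝ)⁻¹ := by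
  have hrpow : EqOn (fun t : ℝ => t ^ (-n : ℝ)) (fun t => (t ^ n)⁻¹) (Ioi 1) := fun t ht => by
    simp [Real.rpow_neg (zero_le_one.trans (le_of_lt ht))]
  have hlt : (-n : ℝ) < -1 := by simp only [neg_lt_neg_iff]; exact_mod_cast hn
  rw [← ofReal_integral_eq_lintegral_ofReal, ← setIntegral_congr_fun measurableSet_Ioi hrpow,
    integral_Ioi_rpow_of_lt hlt one_pos]
  · congr 1
    rw [one_rpow, neg_div, ← div_neg, neg_add', neg_neg, one_div]
  · exact (integrableOn_Ioi_rpow_of_lt hlt one_pos).congr_fun hrpow measurableSet_Ioi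
  · exact (ae_restrict_mem measurableSet_Ioi).mono fun t (ht : 1 < t) => by positivity

theorem lintegral_lintegral_Ioi_one_comp_smul (hE : 1 < finrank ℝ E) {f : E → ℝ≥0∞}
    (hf : Measurable f) :
    ∫⁻ x, (∫⁻ t in Ioi (1 : ℝ), f (t • x)) ∂μ
      = ENNReal.ofReal (finrank ℝ E - 1 : ℝ)⁻¹ * ∫⁻ x, f x ∂μ := by
  have hf' : Measurable fun p : E × ℝ => f (p.2 • p.1) :=
    hf.comp (measurable_snd.smul measurable_fst)
  rw [lintegral_lintegral_swap hf'.aemeasurable]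
  calc ∫⁻ t in Ioi (1 : ℝ), ∫⁻ x, f (t • x) ∂μ
      = ∫⁻ t in Ioi (1 : ℝ), ENNReal.ofReal (t ^ finrank ℝ E)⁻¹ * ∫⁻ x, f x ∂μ :=
        setLIntegral_congr_fun measurableSet_Ioi fun t (ht : 1 < t) => by
          rw [μ.lintegral_comp_smul f (by positivity), abs_of_pos (by positivity)]
    _ = _ := by
        rw [lintegral_mul_const _ (by fun_prop), lintegral_Ioi_one_inv_pow hE]

theorem integral_norm_div_norm_le_integral_norm_fderiv (hE : 1 < finrank ℝ E) {g : E → G}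
    (hg : ContDiff ℝ 1 g) (hs : HasCompactSupport g) :
    ∫ x, ‖g x‖ / ‖x‖ ∂μ ≤ (finrank ℝ E - 1 : ℝ)⁻¹ * ∫ x, ‖fderiv ℝ g x‖ ∂μ := by
  have : Nontrivial E := Module.nontrivial_of_finrank_pos (zero_lt_one.trans hE)
  have hDg : Continuous (fderiv ℝ g) := hg.continuous_fderiv one_ne_zero
  have hint : Integrable (fderiv ℝ g) μ := hDg.integrable_of_hasCompactSupport (hs.fderiv ℝ)
  have hlin : ∫⁻ x, ENNReal.ofReal (‖g x‖ / ‖x‖) ∂μ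
      ≤ ENNReal.ofReal (finrank ℝ E - 1 : ℝ)⁻¹ * ∫⁻ x, ‖fderiv ℝ g x‖ₑ ∂μ :=
    calc ∫⁻ x, ENNReal.ofReal (‖g x‖ / ‖x‖) ∂μ
        ≤ ∫⁻ x, (∫⁻ t in Ioi (1 : ℝ), ‖fderiv ℝ g (t • x)‖ₑ) ∂μ := by
          refine lintegral_mono_ae ?_
          filter_upwards [μ.ae_ne 0] with x hx
          grw [ENNReal.ofReal_div_le (norm_nonneg x), ofReal_norm, ofReal_norm]
          exact ENNReal.div_le_of_le_mul' (hs.enorm_le_mul_lintegral_enorm_fderiv_smul hg hx)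
      _ = _ := lintegral_lintegral_Ioi_one_comp_smul μ hE hDg.measurable.enorm
  have hsub : (0 : ℝ) ≤ (finrank ℝ E - 1 : ℝ)⁻¹ :=
    inv_nonneg.2 (sub_nonneg.2 (by exact_mod_cast hE.le))
  have hmeas : AEStronglyMeasurable (fun x => ‖g x‖ / ‖x‖) μ :=
    (hg.continuous.norm.measurable.div measurable_norm).aestronglyMeasurable
  rw [integral_eq_lintegral_of_nonneg_ae (ae_of_all _ fun x => by positivity) hmeas,
    integral_norm_eq_lintegral_enorm hint.1, ← ENNReal.toReal_ofReal hsub, ← ENNReal.toReal_mul]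
  exact ENNReal.toReal_mono (ENNReal.mul_ne_top ENNReal.ofReal_ne_top hint.2.ne) hlin

end

theorem norm_fderiv_sq {E : Type*} [NormedAddCommGroup E] [NormedSpace ℝ E] {f : E → ℝ} {x : E}
    (hf : DifferentiableAt ℝ f x) :
    ‖fderiv ℝ (fun y => f y ^ 2) x‖ = 2 * |f x| * ‖fderiv ℝ f x‖ := by
  rw [fderiv_fun_pow 2 hf, norm_smul]
  simp

theorem norm_gradient {𝕜 F : Type*} [RCLike 𝕜] [NormedAddCommGroup F] [InnerProductSpace 𝕜 F]
    [CompleteSpace F] (f : F → 𝕜) (x : F) : ‖gradient f x‖ = ‖fderiv 𝕜 f x‖ :=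
  (InnerProductSpace.toDual 𝕜 F).symm.norm_map _

theorem integral_abs_mul_abs_le_sqrt_mul_sqrt {α : Type*} [MeasurableSpace α] {μ : Measure α}
    {f g : α → ℝ} (hf : MemLp f 2 μ) (hg : MemLp g 2 μ) :
    ∫ a, |f a| * |g a| ∂μ ≤ √(∫ a, f a ^ 2 ∂μ) * √(∫ a, g a ^ 2 ∂μ) := by
  have h := integral_mul_norm_le_Lp_mul_Lq Real.HolderConjugate.two_two (by simpa using hf)
    (by simpa using hg)
  simpa only [Real.norm_eq_abs, Real.rpow_two, sq_abs, Real.sqrt_eq_rpow] using h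

/-- Interpolation-type inequality: `∫ F²/‖v‖ ≤ 2 ‖∇F‖_{L²} ‖F‖_{L²}` on `ℝ²`. -/
theorem integral_sq_div_norm_le (F : EuclideanSpace ℝ (Fin 2) → ℝ)
    (hF : ContDiff ℝ 1 F) (hsupp : HasCompactSupport F) :
    ∫ v, F v ^ 2 / ‖v‖
      ≤ 2 * Real.sqrt (∫ v, ‖gradient F v‖ ^ 2) * Real.sqrt (∫ v, F v ^ 2) := by
  have hDF : Continuous (fderiv ℝ F) := hF.continuous_fderiv one_ne_zero
  have hHardy := integral_norm_div_norm_le_integral_norm_fderiv volume (by simp) (hF.pow 2)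
    (hsupp.comp_left (g := fun x : ℝ => x ^ 2) (zero_pow two_ne_zero))
  have hCS := integral_abs_mul_abs_le_sqrt_mul_sqrt (μ := volume)
    (hDF.norm.memLp_of_hasCompactSupport (hsupp.fderiv ℝ).norm)
    (hF.continuous.memLp_of_hasCompactSupport hsupp)
  simp only [norm_gradient]
  calc ∫ v, F v ^ 2 / ‖v‖ = ∫ v, ‖F v ^ 2‖ / ‖v‖ := by simp
    _ ≤ (2 - 1 : ℝ)⁻¹ * ∫ v, ‖fderiv ℝ (fun v => F v ^ 2) v‖ := by simpa using hHardy
    _ = 2 * ∫ v, |‖fderiv ℝ F v‖| * |F v| := by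
        simp_rw [norm_fderiv_sq (hF.differentiable one_ne_zero _), abs_norm, ← integral_const_mul]
        congr 1 with v
        ring
    _ ≤ _ := by
        rw [mul_assoc]
        gcongr
end
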